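/- For all integers k ≥ 2 and r ≥ 2, if φ is a graph homomorphism from the Andrásfai graph A_{k,r} to a graph H with |V(H)| < |V(A_{k,r})|, then H contains an odd cycle of length at most 2k-1. -/

import Mathlib

/-- The generalised Andrásfai graph `A_{k,r}`. -/
def andrasfai (k r : ℕ) : SimpleGraph (Fin ((2*k-1)*(r-1)+2)) :=
  SimpleGraph.fromRel fun i j =>
    (((k : ℚ) - 1) / (2 * k - 1) <
        (min (((i.val : ℤ) - (j.val : ℤ)).natAbs)
            ((2*k-1)*(r-1)+2 - ((i.val : ℤ) - (j.val : ℤ)).natAbs) : ℚ) /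
          ((2*k-1)*(r-1)+2)) ∧
    ((min (((i.val : ℤ) - (j.val : ℤ)).natAbs)
            ((2*k-1)*(r-1)+2 - ((i.val : ℤ) - (j.val : ℤ)).natAbs) : ℚ) /
          ((2*k-1)*(r-1)+2) < (k : ℚ) / (2 * k - 1))

/-!
Write `n = (2k-1)(r-1)+2`, `L = (k-1)(r-1)+1` and `U = k(r-1)+1`, so that `n = L + U`. In `A_{k,r}`
the vertex `x` is adjacent to `x + e` (mod `n`) for every `e ∈ [L, U]`: the circular distance is then
`e` or `n - e`, and both lie in `[L, U]`. Hence distinct vertices `i ≠ j` are joined by a walk of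
length `2k-1`, because `t = j - i ∈ [1, n-1]` satisfies `t + (k-1)n ∈ [(2k-1)L, (2k-1)U]`, i.e. it is
a sum of `2k-1` steps from `[L, U]`. A homomorphism into fewer than `n` vertices identifies some
`i ≠ j`, so it maps this walk to a closed walk of odd length `2k-1`, and every odd closed walk
contains an odd cycle no longer than itself.
-/

open SimpleGraph

namespace SimpleGraph.Walk

variable {V : Type*} {G : SimpleGraph V}

theorem exists_isCycle_odd_length_le {u : V} (w : G.Walk u u) (hw : Odd w.length) :
    ∃ (v : V) (c : G.Walk v v), c.IsCycle ∧ Odd c.length ∧ c.length ≤ w.length := by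
  have hnil : ¬ w.Nil := fun h => by simp [h.length_eq_zero] at hw
  by_cases hpath : w.tail.IsPath
  · have hne : w.length ≠ 1 := fun h => (w.adj_of_length_eq_one h).ne rfl
    refine ⟨u, w, isCycle_iff_isPath_tail_and_le_length.2 ⟨hpath, ?_⟩, hw, le_rfl⟩
    obtain ⟨m, hm⟩ := hw
    omega
  · -- a closed subwalk `c` of `w.tail` splits `w` into two shorter closed walks, one of them odd
    obtain ⟨v, c, ⟨p, q, hpq⟩, hc⟩ : ∃ (v : V) (c : G.Walk v v), c.IsSubwalk w.tail ∧ ¬ c.Nil := by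
      simpa [isPath_iff_isSubwalk_imp_nil] using hpath
    obtain ⟨w', hlen, hw'0⟩ :
        ∃ w' : G.Walk u u, c.length + w'.length = w.length ∧ 0 < w'.length := by
      refine ⟨cons (w.adj_snd hnil) (p.append q), ?_, by simp⟩
      rw [← length_tail_add_one hnil, hpq]
      simp only [length_cons, length_append]
      ring
    have hc0 : 0 < c.length := not_nil_iff_lt_length.mp hc
    rcases Nat.even_or_odd c.length with hce | hco
    · have hw' : Odd w'.length := (Nat.odd_add'.mp (hlen ▸ hw)).mpr hce
      obtain ⟨x, d, hd, hdo, hdl⟩ := exists_isCycle_odd_length_le w' hw'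
      exact ⟨x, d, hd, hdo, by omega⟩
    · obtain ⟨x, d, hd, hdo, hdl⟩ := exists_isCycle_odd_length_le c hco
      exact ⟨x, d, hd, hdo, by omega⟩
termination_by w.length

end SimpleGraph.Walk

theorem SimpleGraph.exists_walk_add_natCast_length_eq {A : Type*} [AddMonoidWithOne A]
    (G : SimpleGraph A) {L U : ℕ} (hG : ∀ (x : A) (e : ℕ), L ≤ e → e ≤ U → G.Adj x (x + e))
    {m s : ℕ} (hL : m * L ≤ s) (hU : s ≤ m * U) (x : A) :
    ∃ w : G.Walk x (x + s), w.length = m := by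
  induction m generalizing s x with
  | zero =>
    obtain rfl : s = 0 := by omega
    exact ⟨Walk.nil.copy rfl (by simp), by simp⟩
  | succ m ih =>
    have hLU : L ≤ U := le_of_mul_le_mul_left (hL.trans hU) m.succ_pos
    have hmLU : m * L ≤ m * U := Nat.mul_le_mul_left m hLU
    rw [Nat.succ_mul] at hL hU
    -- the first step `e` is chosen so that the rest `s - e` lies in `[m * L, m * U]`
    set e := max L (s - m * U)
    obtain ⟨w, hw⟩ := ih (s := s - e) (by omega) (by omega) (x + e)
    refine ⟨(Walk.cons (hG x e (le_max_left ..) (by omega)) w).copy rfl ?_,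
      by rw [Walk.length_copy, Walk.length_cons, hw]⟩
    rw [add_assoc, ← Nat.cast_add]
    congr 2
    omega

section Andrasfai

open Fin.NatCast

variable {k r : ℕ}

theorem andrasfai_ratio_bounds (hk : 1 ≤ k) (hr : 1 ≤ r) {d : ℚ}
    (hL : ((k : ℚ) - 1) * (r - 1) + 1 ≤ d) (hU : d ≤ k * (r - 1) + 1) :
    ((k : ℚ) - 1) / (2 * k - 1) < d / ((2 * k - 1) * (r - 1) + 2) ∧
      d / ((2 * k - 1) * (r - 1) + 2) < (k : ℚ) / (2 * k - 1) := by
  have hk' : (1 : ℚ) ≤ k := by exact_mod_cast hk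
  have hr' : (1 : ℚ) ≤ r := by exact_mod_cast hr
  have hD : (0 : ℚ) < 2 * k - 1 := by linarith
  have hN : (0 : ℚ) < (2 * k - 1) * (r - 1) + 2 := by nlinarith
  rw [div_lt_div_iff₀ hD hN, div_lt_div_iff₀ hN hD]
  constructor <;> nlinarith

theorem andrasfai_adj_add_natCast (hk : 1 ≤ k) (hr : 1 ≤ r) (x : Fin ((2*k-1)*(r-1)+2))
    {e : ℕ} (hL : (k-1)*(r-1)+1 ≤ e) (hU : e ≤ k*(r-1)+1) :
    (andrasfai k r).Adj x (x + e) := by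
  have hn : (2*k-1)*(r-1)+2 = ((k-1)*(r-1)+1) + (k*(r-1)+1) := by
    obtain ⟨k, rfl⟩ := Nat.exists_eq_add_of_le hk
    simp only [Nat.add_sub_cancel_left, show 2 * (1 + k) - 1 = 1 + 2 * k by omega]
    ring
  have he : e < (2*k-1)*(r-1)+2 := by omega
  have hcast : (((2*k-1)*(r-1)+2 : ℕ) : ℚ) = (2 * k - 1) * (r - 1) + 2 := by
    push_cast [Nat.cast_sub (show 1 ≤ 2 * k by omega), Nat.cast_sub hr]
    ring
  have hLq : ((k : ℚ) - 1) * (r - 1) + 1 ≤ e := by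
    exact_mod_cast (show (((k-1)*(r-1)+1 : ℕ) : ℚ) ≤ e by exact_mod_cast hL)
  have hUq : (e : ℚ) ≤ k * (r - 1) + 1 := by
    exact_mod_cast (show (e : ℚ) ≤ ((k*(r-1)+1 : ℕ) : ℚ) by exact_mod_cast hU)
  have hval := Fin.val_add_eq_ite x e
  rw [Fin.val_natCast, Nat.mod_eq_of_lt he] at hval
  generalize x + (e : Fin ((2*k-1)*(r-1)+2)) = y at hval ⊢
  have hD : ((x : ℤ) - y).natAbs = e ∨ ((x : ℤ) - y).natAbs + e = (2*k-1)*(r-1)+2 := by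
    split_ifs at hval <;> omega
  have hDq : ((((x : ℤ) - y).natAbs : ℕ) : ℚ) = e ∨
      ((((x : ℤ) - y).natAbs : ℕ) : ℚ) = (2 * k - 1) * (r - 1) + 2 - e := by
    rw [← hcast, eq_sub_iff_add_eq]
    exact_mod_cast hD
  rw [andrasfai, fromRel_adj]
  refine ⟨fun h => ?_, Or.inl (andrasfai_ratio_bounds hk hr ?_ ?_)⟩
  · have := congrArg Fin.val h
    split_ifs at hval <;> omega
  · rcases hDq with h | h <;> rw [h]
    exacts [le_min hLq (by linarith), le_min (by linarith) (by linarith)]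
  · rcases hDq with h | h <;> rw [h]
    exacts [min_le_of_left_le hUq, min_le_of_right_le (by linarith)]

theorem andrasfai_exists_walk_length_eq (hk : 1 ≤ k) (hr : 1 ≤ r)
    {i j : Fin ((2*k-1)*(r-1)+2)} (hij : i ≠ j) :
    ∃ w : (andrasfai k r).Walk i j, w.length = 2*k-1 := by
  have ht : 1 ≤ (j - i).val :=
    Nat.one_le_iff_ne_zero.mpr (Fin.val_ne_zero_iff.mpr (sub_ne_zero.mpr hij.symm))
  have ht' := (j - i).isLt
  -- `j - i` is congruent to `(j - i) + (k - 1) n`, which lies in `[(2k-1) L, (2k-1) U]`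
  obtain ⟨w, hw⟩ := (andrasfai k r).exists_walk_add_natCast_length_eq
    (andrasfai_adj_add_natCast hk hr) (m := 2*k-1) (s := (j - i).val + (k-1) * ((2*k-1)*(r-1)+2))
    (by zify [hk, hr, (by omega : 1 ≤ 2 * k)] at ht ⊢; nlinarith)
    (by zify [hk, hr, (by omega : 1 ≤ 2 * k)] at ht' ⊢; nlinarith) i
  refine ⟨w.copy rfl ?_, by rw [Walk.length_copy, hw]⟩
  rw [Nat.cast_add, Fin.natCast_eq_zero.mpr (dvd_mul_left _ _), add_zero, Fin.cast_val_eq_self,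
    add_sub_cancel]

end Andrasfai

/-- If `φ : A_{k,r} →g H` is a graph homomorphism into a graph `H` with fewer vertices than
`A_{k,r}`, then `H` contains an odd cycle of length at most `2k-1`. -/
theorem andrasfai_hom_target_has_short_odd_cycle (k r : ℕ) (hk : 2 ≤ k) (hr : 2 ≤ r)
    {W : Type} [Fintype W] (H : SimpleGraph W)
    (φ : andrasfai k r →g H) (hcard : Fintype.card W < (2*k-1)*(r-1)+2) :
    ∃ (x : W) (c : H.Walk x x), c.IsCycle ∧ Odd c.length ∧ c.length ≤ 2*k-1 := by
  obtain ⟨i, j, hij, hφ⟩ := Fintype.exists_ne_map_eq_of_card_lt φ (by simpa using hcard)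
  obtain ⟨w, hw⟩ := andrasfai_exists_walk_length_eq (by omega) (by omega) hij
  let c : H.Walk (φ i) (φ i) := (w.map φ).copy rfl hφ.symm
  have hc : c.length = 2*k-1 := by rw [Walk.length_copy, Walk.length_map, hw]
  obtain ⟨x, d, hd, hdo, hdl⟩ := c.exists_isCycle_odd_length_le (by rw [hc]; exact ⟨k-1, by omega⟩)
  exact ⟨x, d, hd, hdo, hc ▸ hdl⟩
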